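/- Let A : ℝ → Matrix (Fin n) (Fin n) ℝ be continuous and let χ^s A denote the time shift (χ^s A)(t) = A(t + s). Then for all t, s : ℝ the Cauchy matrices satisfy 𝔛(t, 0, χ^s A) = 𝔛(t + s, s, A). Consequently the maps X^t(A, x) = (χ^t A, 𝔛(t, 0, A) · x) on (matrix functions) × ℝⁿ satisfy the flow (skew-product) property X^{t+s}(A, x) = X^t(X^s(A, x)) for all t, s : ℝ, A, and x : ℝⁿ. -/

import Mathlib

/-- The time shift `(χ^s A)(t) = A(t + s)` on coefficient functions. -/
def timeShift {n : ℕ} (s : ℝ) (A : ℝ → Matrix (Fin n) (Fin n) ℝ) :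
    ℝ → Matrix (Fin n) (Fin n) ℝ :=
  fun t => A (t + s)

/-- The linear extension (skew-product flow) over the shift:
`X^t(A, x) = (χ^t A, 𝔛(t, 0, A) · x)`, where `𝔛 t τ A` is a given Cauchy-matrix map. -/
def linearExtension {n : ℕ}
    (𝔛 : ℝ → ℝ → (ℝ → Matrix (Fin n) (Fin n) ℝ) → Matrix (Fin n) (Fin n) ℝ) (t : ℝ) :
    (ℝ → Matrix (Fin n) (Fin n) ℝ) × (Fin n → ℝ) →
      (ℝ → Matrix (Fin n) (Fin n) ℝ) × (Fin n → ℝ) :=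
  fun p => (timeShift t p.1, (𝔛 t 0 p.1).mulVec p.2)


open Set

/-- Uniqueness for the linear ODE `y' = B t ·ᵥ y` with continuous coefficients. -/
lemma linODE_vec_uniq {n : ℕ} {B : ℝ → Matrix (Fin n) (Fin n) ℝ} (hB : Continuous B)
    {f g : ℝ → Fin n → ℝ}
    (hf : ∀ t, HasDerivAt f ((B t).mulVec (f t)) t)
    (hg : ∀ t, HasDerivAt g ((B t).mulVec (g t)) t)
    (h0 : f 0 = g 0) (t : ℝ) : f t = g t := by
  set a : ℝ := -(|t| + 1) with ha
  set b : ℝ := |t| + 1 with hb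
  have hab : a < b := by
    have : (0:ℝ) < |t| + 1 := by positivity
    simp only [ha, hb]; linarith
  set proj : ℝ → ℝ := fun u => max a (min b u) with hprojdef
  have hproj_mem : ∀ u, proj u ∈ Icc a b := fun u =>
    ⟨le_max_left _ _, max_le hab.le (min_le_left _ _)⟩
  have hproj_eq : ∀ u ∈ Icc a b, proj u = u := by
    intro u hu
    simp only [hprojdef]
    rw [min_eq_right hu.2, max_eq_right hu.1]
  -- the linear map sending a matrix to its `mulVec` continuous linear map
  set T : Matrix (Fin n) (Fin n) ℝ →ₗ[ℝ] ((Fin n → ℝ) →L[ℝ] (Fin n → ℝ)) :=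
    (LinearMap.toContinuousLinearMap.toLinearMap).comp Matrix.toLin'.toLinearMap with hT
  have hTapp : ∀ (M : Matrix (Fin n) (Fin n) ℝ) (y : Fin n → ℝ), T M y = M.mulVec y := by
    intro M y
    simp [hT, Matrix.toLin'_apply]
  have hTcont : Continuous T := T.continuous_of_finiteDimensional
  obtain ⟨u₀, -, hu₀⟩ :=
    isCompact_Icc.exists_isMaxOn (Set.nonempty_Icc.2 hab.le)
      ((hTcont.comp hB).norm.continuousOn : ContinuousOn (fun u => ‖T (B u)‖) (Icc a b))
  set C : ℝ := ‖T (B u₀)‖ with hC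
  have hC0 : 0 ≤ C := norm_nonneg _
  have hlip : ∀ u : ℝ, LipschitzWith C.toNNReal (fun y => (B (proj u)).mulVec y) := by
    intro u
    have h1 : LipschitzWith ‖T (B (proj u))‖₊ (T (B (proj u))) :=
      (T (B (proj u))).lipschitz
    have h2 : ‖T (B (proj u))‖₊ ≤ C.toNNReal := by
      rw [← NNReal.coe_le_coe, coe_nnnorm, Real.coe_toNNReal _ hC0]
      exact hu₀ (hproj_mem u)
    have := h1.weaken h2
    convert this using 1; funext y; exact (hTapp _ y).symm
  have ht0 : (0:ℝ) ∈ Ioo a b := by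
    constructor <;> simp only [ha, hb] <;> [linarith [abs_nonneg t]; linarith [abs_nonneg t]]
  have key := ODE_solution_unique_of_mem_Icc
    (v := fun u y => (B (proj u)).mulVec y) (s := fun _ => (univ : Set (Fin n → ℝ)))
    (fun u _ => (hlip u).lipschitzOnWith) ht0
    (fun u _ => (hf u).continuousAt.continuousWithinAt)
    (fun u hu => by simpa only [hproj_eq u (Ioo_subset_Icc_self hu)] using hf u)
    (fun _ _ => trivial)
    (fun u _ => (hg u).continuousAt.continuousWithinAt)
    (fun u hu => by simpa only [hproj_eq u (Ioo_subset_Icc_self hu)] using hg u)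
    (fun _ _ => trivial) h0
  exact key ⟨by simp only [ha]; linarith [neg_abs_le t, abs_nonneg t],
    by simp only [hb]; linarith [le_abs_self t]⟩

/-- Matrix-valued version of uniqueness, entrywise derivatives. -/
lemma linODE_mat_uniq {n : ℕ} {B : ℝ → Matrix (Fin n) (Fin n) ℝ} (hB : Continuous B)
    {f g : ℝ → Matrix (Fin n) (Fin n) ℝ}
    (hf : ∀ (t : ℝ) (i j : Fin n), HasDerivAt (fun u => f u i j) ((B t * f t) i j) t)
    (hg : ∀ (t : ℝ) (i j : Fin n), HasDerivAt (fun u => g u i j) ((B t * g t) i j) t)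
    (h0 : f 0 = g 0) (t : ℝ) : f t = g t := by
  ext i j
  have hf' : ∀ u, HasDerivAt (fun u => fun i => f u i j)
      ((B u).mulVec (fun i => f u i j)) u := by
    intro u
    rw [hasDerivAt_pi]
    intro i
    exact hf u i j
  have hg' : ∀ u, HasDerivAt (fun u => fun i => g u i j)
      ((B u).mulVec (fun i => g u i j)) u := by
    intro u
    rw [hasDerivAt_pi]
    intro i
    exact hg u i j
  have := linODE_vec_uniq hB hf' hg' (by rw [h0]) t
  exact congrFun this i

lemma timeShift_continuous {n : ℕ} (s : ℝ) (A : ℝ → Matrix (Fin n) (Fin n) ℝ)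
    (hA : Continuous A) : Continuous (timeShift s A) :=
  hA.comp (continuous_id.add continuous_const)

/-- **Shift property and flow (skew-product) property of the Cauchy matrix.**
Suppose `𝔛 t τ A` is the Cauchy matrix of `ẋ = A(t)·x`, i.e. for every continuous `A` and
every `τ`, the function `t ↦ 𝔛 t τ A` solves the matrix ODE `∂/∂t 𝔛(t,τ,A) = A(t) * 𝔛(t,τ,A)`
(stated entrywise) with `𝔛 τ τ A = 1`.  Then for every continuous `A`:
1. for all `t s : ℝ`, `𝔛(t, 0, χ^s A) = 𝔛(t + s, s, A)`;
2. the maps `X^t(A, x) = (χ^t A, 𝔛(t,0,A)·x)` satisfy `X^{t+s}(A,x) = X^t(X^s(A,x))`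
   for all `t s : ℝ` and `x : ℝⁿ`. -/
theorem cauchy_matrix_shift_and_flow {n : ℕ}
    (𝔛 : ℝ → ℝ → (ℝ → Matrix (Fin n) (Fin n) ℝ) → Matrix (Fin n) (Fin n) ℝ)
    (hderiv : ∀ (A : ℝ → Matrix (Fin n) (Fin n) ℝ), Continuous A →
      ∀ (τ t : ℝ) (i j : Fin n),
        HasDerivAt (fun u : ℝ => 𝔛 u τ A i j) ((A t * 𝔛 t τ A) i j) t)
    (hinit : ∀ (A : ℝ → Matrix (Fin n) (Fin n) ℝ), Continuous A →
      ∀ τ : ℝ, 𝔛 τ τ A = 1)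
    (A : ℝ → Matrix (Fin n) (Fin n) ℝ) (hA : Continuous A) :
    (∀ t s : ℝ, 𝔛 t 0 (timeShift s A) = 𝔛 (t + s) s A) ∧
    (∀ (t s : ℝ) (x : Fin n → ℝ),
      linearExtension 𝔛 (t + s) (A, x) =
        linearExtension 𝔛 t (linearExtension 𝔛 s (A, x))) := by
  have part1 : ∀ t s : ℝ, 𝔛 t 0 (timeShift s A) = 𝔛 (t + s) s A := by
    intro t s
    have hB : Continuous (timeShift s A) := timeShift_continuous s A hA
    refine linODE_mat_uniq (B := timeShift s A) hB
      (f := fun u => 𝔛 u 0 (timeShift s A)) (g := fun u => 𝔛 (u + s) s A)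
      (fun u i j => hderiv _ hB 0 u i j) ?_ ?_ t
    · intro u i j
      have h1 := hderiv A hA s (u + s) i j
      have h2 : HasDerivAt (fun v : ℝ => v + s) 1 u := (hasDerivAt_id u).add_const s
      have h3 := HasDerivAt.comp u h1 h2
      simpa [timeShift, Function.comp_def] using h3
    · show 𝔛 0 0 (timeShift s A) = 𝔛 (0 + s) s A
      rw [hinit _ hB 0, zero_add, hinit A hA s]
  have comp : ∀ t s : ℝ, 𝔛 (t + s) 0 A = 𝔛 (t + s) s A * 𝔛 s 0 A := by
    intro t s
    have hB : Continuous (timeShift s A) := timeShift_continuous s A hA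
    refine linODE_mat_uniq (B := timeShift s A) hB
      (f := fun u => 𝔛 (u + s) 0 A) (g := fun u => 𝔛 (u + s) s A * 𝔛 s 0 A)
      ?_ ?_ ?_ t
    · intro u i j
      have h1 := hderiv A hA 0 (u + s) i j
      have h2 : HasDerivAt (fun v : ℝ => v + s) 1 u := (hasDerivAt_id u).add_const s
      have h3 := HasDerivAt.comp u h1 h2
      simpa [timeShift, Function.comp_def] using h3
    · intro u i j
      have h2 : HasDerivAt (fun v : ℝ => v + s) 1 u := (hasDerivAt_id u).add_const s
      have hk : ∀ k ∈ Finset.univ, HasDerivAt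
          (fun v : ℝ => 𝔛 (v + s) s A i k * 𝔛 s 0 A k j)
          (((A (u + s) * 𝔛 (u + s) s A) i k) * 𝔛 s 0 A k j) u := by
        intro k _
        have h1 := hderiv A hA s (u + s) i k
        have h3 := HasDerivAt.comp u h1 h2
        have h4 : HasDerivAt (fun v : ℝ => 𝔛 (v + s) s A i k)
            ((A (u + s) * 𝔛 (u + s) s A) i k) u := by simpa [Function.comp_def] using h3
        exact h4.mul_const _
      have hsum := HasDerivAt.sum hk
      have e1 : ∀ v : ℝ, (𝔛 (v + s) s A * 𝔛 s 0 A) i j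
          = ∑ k, 𝔛 (v + s) s A i k * 𝔛 s 0 A k j := fun v => Matrix.mul_apply
      have e2 : (timeShift s A u * (𝔛 (u + s) s A * 𝔛 s 0 A)) i j
          = ∑ k, (A (u + s) * 𝔛 (u + s) s A) i k * 𝔛 s 0 A k j := by
        show (A (u + s) * (𝔛 (u + s) s A * 𝔛 s 0 A)) i j = _
        rw [← Matrix.mul_assoc, Matrix.mul_apply]
      rw [e2]
      exact hsum.congr_deriv rfl |>.congr_of_eventuallyEq
        (Filter.Eventually.of_forall fun v => by rw [Finset.sum_apply]; exact e1 v) |>.congr_deriv rfl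
    · show 𝔛 (0 + s) 0 A = 𝔛 (0 + s) s A * 𝔛 s 0 A
      rw [zero_add, hinit A hA s, one_mul]
  refine ⟨part1, ?_⟩
  intro t s x
  simp only [linearExtension]
  refine Prod.ext ?_ ?_
  · funext u
    simp [timeShift, add_assoc]
  · show (𝔛 (t + s) 0 A).mulVec x
      = (𝔛 t 0 (timeShift s A)).mulVec ((𝔛 s 0 A).mulVec x)
    rw [part1 t s, Matrix.mulVec_mulVec, ← comp t s]
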